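/- If ε₁ and ε₂ are independent random variables each following a Gumbel distribution with location 0 and scale σ > 0 (CDF F(x) = exp(-exp(-x/σ))), then for any real constants a and b, the probability that a + ε₁ ≥ b + ε₂ equals 1 / (1 + exp(-(a - b)/σ)). -/

import Mathlib

open MeasureTheory Real

/-!
The law of `εᵢ` is the Gumbel measure, whose CDF `F(x) = exp(-exp(-x/σ))` satisfies
`F(x + c) = exp(-k exp(-x/σ))` with `k = exp(-c/σ)`. By independence,
`P(ε₂ ≤ ε₁ + c) = ∫ F(x + c) f(x) dx`, and `F(x + c) f(x)` is `1/(1 + k)` times the derivative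
of `exp(-(1 + k) exp(-x/σ))`, which increases from `0` to `1`.
-/

open Filter Set Topology ProbabilityTheory

theorem integrable_deriv_of_nonneg {g g' : ℝ → ℝ} {l₁ l₂ : ℝ}
    (hderiv : ∀ x, HasDerivAt g (g' x) x) (hg' : ∀ x, 0 ≤ g' x)
    (hbot : Tendsto g atBot (𝓝 l₁)) (htop : Tendsto g atTop (𝓝 l₂)) : Integrable g' := by
  have hmono : Monotone g := monotone_of_deriv_nonneg (fun x => (hderiv x).differentiableAt)
    fun x => (hderiv x).deriv ▸ hg' x
  have hcont : Continuous g := continuous_iff_continuousAt.2 fun x => (hderiv x).continuousAt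
  have hint : ∀ a b, IntegrableOn g' (Ioc a b) := fun a b =>
    intervalIntegral.integrableOn_deriv_of_nonneg hcont.continuousOn
      (fun x _ => hderiv x) fun x _ => hg' x
  refine integrable_of_intervalIntegral_norm_bounded (l₂ - l₁) (fun x => hint (-x) x)
    tendsto_neg_atTop_atBot tendsto_id ?_
  filter_upwards [eventually_ge_atTop 0] with x hx
  have hle : -x ≤ x := by linarith
  calc ∫ y in -x..x, ‖g' y‖ = ∫ y in -x..x, g' y :=
        intervalIntegral.integral_congr fun y _ => Real.norm_of_nonneg (hg' y)
    _ = g x - g (-x) := intervalIntegral.integral_eq_sub_of_hasDerivAt (fun y _ => hderiv y)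
        ((intervalIntegrable_iff_integrableOn_Ioc_of_le hle).2 (hint _ _))
    _ ≤ l₂ - l₁ := sub_le_sub (hmono.ge_of_tendsto htop x) (hmono.le_of_tendsto hbot (-x))

namespace ProbabilityTheory

theorem IndepFun.measure_le_add {Ω : Type*} [MeasurableSpace Ω]
    {μ : Measure Ω} [IsFiniteMeasure μ] {X Y : Ω → ℝ} (hX : Measurable X) (hY : Measurable Y)
    (hXY : IndepFun X Y μ) (c : ℝ) :
    μ {ω | Y ω ≤ X ω + c} = ∫⁻ x, μ.map Y (Iic (x + c)) ∂μ.map X := by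
  have hT : MeasurableSet {p : ℝ × ℝ | p.2 ≤ p.1 + c} :=
    measurableSet_le measurable_snd (measurable_fst.add_const c)
  change μ ((fun ω => (X ω, Y ω)) ⁻¹' {p : ℝ × ℝ | p.2 ≤ p.1 + c}) = _
  rw [← Measure.map_apply (hX.prodMk hY) hT,
    hXY.map_prod_eq_prod_map_map hX.aemeasurable hY.aemeasurable, Measure.prod_apply hT]
  rfl

/-- For `t > 0`, `gumbelCDF σ t` is the CDF of the Gumbel law of scale `σ` and location
`σ log t`; this parametrisation turns products of such CDFs into sums of the parameters. -/
noncomputable def gumbelCDF (σ t x : ℝ) : ℝ := exp (-t * exp (-x / σ))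

noncomputable def gumbelPDF (σ t x : ℝ) : ℝ := t / σ * exp (-x / σ) * gumbelCDF σ t x

noncomputable def gumbelMeasure (σ : ℝ) : Measure ℝ :=
  volume.withDensity fun x => ENNReal.ofReal (gumbelPDF σ 1 x)

variable {σ t : ℝ}

lemma gumbelCDF_one (σ x : ℝ) : gumbelCDF σ 1 x = exp (-exp (-x / σ)) := by
  simp [gumbelCDF]

lemma gumbelCDF_mul (σ s t x : ℝ) :
    gumbelCDF σ s x * gumbelCDF σ t x = gumbelCDF σ (s + t) x := by
  simp only [gumbelCDF, ← exp_add]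
  ring_nf

lemma gumbelCDF_add (σ t x c : ℝ) :
    gumbelCDF σ t (x + c) = gumbelCDF σ (t * exp (-c / σ)) x := by
  unfold gumbelCDF
  rw [neg_mul, neg_mul, mul_assoc, ← exp_add]
  ring_nf

lemma gumbelPDF_mul_gumbelCDF (σ s t x : ℝ) (hst : s + t ≠ 0) :
    gumbelPDF σ s x * gumbelCDF σ t x = s / (s + t) * gumbelPDF σ (s + t) x := by
  simp only [gumbelPDF, mul_assoc, gumbelCDF_mul]
  field_simp

lemma gumbelPDF_nonneg (hσ : 0 < σ) (ht : 0 ≤ t) (x : ℝ) : 0 ≤ gumbelPDF σ t x := by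
  unfold gumbelPDF gumbelCDF
  positivity

lemma continuous_gumbelCDF (σ t : ℝ) : Continuous (gumbelCDF σ t) := by
  unfold gumbelCDF
  fun_prop

lemma continuous_gumbelPDF (σ t : ℝ) : Continuous (gumbelPDF σ t) := by
  unfold gumbelPDF gumbelCDF
  fun_prop

lemma hasDerivAt_gumbelCDF (σ t x : ℝ) : HasDerivAt (gumbelCDF σ t) (gumbelPDF σ t x) x := by
  have h := ((((hasDerivAt_neg x).div_const σ).exp).const_mul (-t)).exp
  exact h.congr_deriv (by unfold gumbelPDF gumbelCDF; ring)

lemma tendsto_gumbelCDF_atTop (hσ : 0 < σ) (t : ℝ) : Tendsto (gumbelCDF σ t) atTop (𝓝 1) := by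
  have h : Tendsto (fun x : ℝ => -x / σ) atTop atBot :=
    tendsto_neg_atTop_atBot.atBot_div_const hσ
  have h' : Tendsto (fun x => -t * exp (-x / σ)) atTop (𝓝 0) := by
    simpa using (tendsto_exp_atBot.comp h).const_mul (-t)
  have hlim := (continuous_exp.tendsto 0).comp h'
  rwa [exp_zero] at hlim

lemma tendsto_gumbelCDF_atBot (hσ : 0 < σ) (ht : 0 < t) :
    Tendsto (gumbelCDF σ t) atBot (𝓝 0) := by
  have h : Tendsto (fun x : ℝ => -x / σ) atBot atTop :=
    tendsto_neg_atBot_atTop.atTop_div_const hσ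
  have h' : Tendsto (fun x => -t * exp (-x / σ)) atBot atBot :=
    (tendsto_exp_atTop.comp h).const_mul_atTop_of_neg (neg_lt_zero.2 ht)
  exact tendsto_exp_atBot.comp h'

lemma integrable_gumbelPDF (hσ : 0 < σ) (ht : 0 < t) : Integrable (gumbelPDF σ t) :=
  integrable_deriv_of_nonneg (hasDerivAt_gumbelCDF σ t) (gumbelPDF_nonneg hσ ht.le)
    (tendsto_gumbelCDF_atBot hσ ht) (tendsto_gumbelCDF_atTop hσ t)

lemma integral_gumbelPDF (hσ : 0 < σ) (ht : 0 < t) : ∫ x, gumbelPDF σ t x = 1 := by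
  simpa using integral_of_hasDerivAt_of_tendsto (hasDerivAt_gumbelCDF σ t)
    (integrable_gumbelPDF hσ ht) (tendsto_gumbelCDF_atBot hσ ht) (tendsto_gumbelCDF_atTop hσ t)

lemma setIntegral_Iic_gumbelPDF (hσ : 0 < σ) (ht : 0 < t) (x : ℝ) :
    ∫ y in Iic x, gumbelPDF σ t y = gumbelCDF σ t x := by
  simpa using integral_Iic_of_hasDerivAt_of_tendsto' (fun y _ => hasDerivAt_gumbelCDF σ t y)
    (integrable_gumbelPDF hσ ht).integrableOn (tendsto_gumbelCDF_atBot hσ ht)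

lemma gumbelMeasure_Iic (hσ : 0 < σ) (x : ℝ) :
    gumbelMeasure σ (Iic x) = ENNReal.ofReal (gumbelCDF σ 1 x) := by
  rw [gumbelMeasure, withDensity_apply _ measurableSet_Iic,
    ← setIntegral_Iic_gumbelPDF hσ one_pos x,
    ofReal_integral_eq_lintegral_ofReal (integrable_gumbelPDF hσ one_pos).integrableOn
      (ae_of_all _ (gumbelPDF_nonneg hσ zero_le_one))]

lemma lintegral_gumbelCDF_gumbelMeasure (hσ : 0 < σ) (ht : -1 < t) :
    ∫⁻ x, ENNReal.ofReal (gumbelCDF σ t x) ∂gumbelMeasure σ = ENNReal.ofReal (1 / (1 + t)) := by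
  have ht' : 0 < 1 + t := by linarith
  calc ∫⁻ x, ENNReal.ofReal (gumbelCDF σ t x) ∂gumbelMeasure σ
      = ∫⁻ x, ENNReal.ofReal (gumbelPDF σ 1 x * gumbelCDF σ t x) := by
        rw [gumbelMeasure, lintegral_withDensity_eq_lintegral_mul _
          (continuous_gumbelPDF σ 1).measurable.ennreal_ofReal
          (continuous_gumbelCDF σ t).measurable.ennreal_ofReal]
        simp only [Pi.mul_apply, ← ENNReal.ofReal_mul (gumbelPDF_nonneg hσ zero_le_one _)]
    _ = ∫⁻ x, ENNReal.ofReal (1 / (1 + t) * gumbelPDF σ (1 + t) x) := by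
        simp only [gumbelPDF_mul_gumbelCDF σ 1 t _ ht'.ne']
    _ = ENNReal.ofReal (1 / (1 + t)) := by
        rw [← ofReal_integral_eq_lintegral_ofReal ((integrable_gumbelPDF hσ ht').const_mul _)
          (ae_of_all _ fun x => mul_nonneg (by positivity) (gumbelPDF_nonneg hσ ht'.le x)),
          integral_const_mul, integral_gumbelPDF hσ ht', mul_one]

lemma map_eq_gumbelMeasure {Ω : Type*} [MeasurableSpace Ω] {μ : Measure Ω} [IsFiniteMeasure μ]
    (hσ : 0 < σ) {ε : Ω → ℝ} (hε : Measurable ε)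
    (hcdf : ∀ x, μ {ω | ε ω ≤ x} = ENNReal.ofReal (exp (-exp (-x / σ)))) :
    μ.map ε = gumbelMeasure σ := by
  refine Measure.ext_of_Iic _ _ fun x => ?_
  rw [Measure.map_apply hε measurableSet_Iic, gumbelMeasure_Iic hσ, gumbelCDF_one]
  exact hcdf x

end ProbabilityTheory

/-- If ε₁ and ε₂ are independent Gumbel(0,σ) random variables (CDF
`x ↦ exp(-exp(-x/σ))`), then for any reals `a b`,
`P(a + ε₁ ≥ b + ε₂) = 1/(1 + exp(-(a-b)/σ))`. -/
theorem stmt_0 {Ω : Type*} [MeasurableSpace Ω] (μ : Measure Ω) [IsProbabilityMeasure μ]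
    (σ : ℝ) (hσ : 0 < σ) (ε₁ ε₂ : Ω → ℝ) (h₁ : Measurable ε₁) (h₂ : Measurable ε₂)
    (hindep : ProbabilityTheory.IndepFun ε₁ ε₂ μ)
    (hcdf₁ : ∀ x : ℝ, μ {ω | ε₁ ω ≤ x} = ENNReal.ofReal (Real.exp (-Real.exp (-x / σ))))
    (hcdf₂ : ∀ x : ℝ, μ {ω | ε₂ ω ≤ x} = ENNReal.ofReal (Real.exp (-Real.exp (-x / σ))))
    (a b : ℝ) :
    μ {ω | b + ε₂ ω ≤ a + ε₁ ω} = ENNReal.ofReal (1 / (1 + Real.exp (-(a - b) / σ))) := by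
  have hset : {ω | b + ε₂ ω ≤ a + ε₁ ω} = {ω | ε₂ ω ≤ ε₁ ω + (a - b)} := by
    ext ω
    simp only [mem_ofPred_eq]
    constructor <;> intro h <;> linarith
  have hk : -1 < exp (-(a - b) / σ) := by linarith [exp_pos (-(a - b) / σ)]
  rw [hset, hindep.measure_le_add h₁ h₂, map_eq_gumbelMeasure hσ h₁ hcdf₁,
    map_eq_gumbelMeasure hσ h₂ hcdf₂]
  simp only [gumbelMeasure_Iic hσ, gumbelCDF_add, one_mul]
  exact lintegral_gumbelCDF_gumbelMeasure hσ hk
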